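/- Let P be a convex polyomino and let T be a triangulation of P. Then T is 3-colorable if and only if T contains no induced subgraph isomorphic to T1 and no induced subgraph isomorphic to T2. -/

import Mathlib

/-!
Both `T1` and `T2` contain an odd wheel, a vertex adjacent to every vertex of an odd cycle, which
cannot be 3-coloured; so a 3-colourable triangulation contains neither. Conversely, a 2×2 block of
cells with an odd number of anti-diagonals induces a rotated copy of `T1` or `T2`, so if neither
occurs then `d`, as a function to the group `Fin 2`, has vanishing mixed differences on every
block. On a row- and column-convex set of cells this makes `d (i, j) = X i + Y j`, and colouring
the vertex `(i, j)` by `A i + B j` in `ZMod 3`, where `A` and `B` step by `±1` according to `X`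
and `Y`, is proper.
-/

/-- The edges of the 3×3 grid graph on vertices `0,…,8` (labels `1,…,9`, rows
`(1,2,3), (4,5,6), (7,8,9)` from top to bottom; vertex `i : Fin 9` has label `i+1`). -/
def gridEdges33 : Set (Sym2 (Fin 9)) :=
  {s(0, 1), s(1, 2), s(3, 4), s(4, 5), s(6, 7), s(7, 8),
   s(0, 3), s(1, 4), s(2, 5), s(3, 6), s(4, 7), s(5, 8)}

/-- The triangulation `T1`: the 3×3 grid together with the diagonals
`{2,4}, {2,6}, {5,7}, {6,8}` (in labels `1,…,9`). -/
def T1 : SimpleGraph (Fin 9) :=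
  SimpleGraph.fromEdgeSet (gridEdges33 ∪ {s(1, 3), s(1, 5), s(4, 6), s(5, 7)})

/-- The triangulation `T2`: the 3×3 grid together with the diagonals
`{1,5}, {3,5}, {5,9}, {4,8}` (in labels `1,…,9`). -/
def T2 : SimpleGraph (Fin 9) :=
  SimpleGraph.fromEdgeSet (gridEdges33 ∪ {s(0, 4), s(2, 4), s(4, 8), s(3, 7)})
/-- Two cells of `ℤ²` are edge-adjacent. -/
def CellAdj (a b : ℤ × ℤ) : Prop :=
  (a.1 - b.1).natAbs + (a.2 - b.2).natAbs = 1

/-- A polyomino: a finite nonempty set of cells, connected under edge-adjacency. -/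
def IsPolyomino (P : Finset (ℤ × ℤ)) : Prop :=
  P.Nonempty ∧ ∀ a ∈ P, ∀ b ∈ P,
    Relation.ReflTransGen (fun x y => x ∈ P ∧ y ∈ P ∧ CellAdj x y) a b

/-- The vertex set of a polyomino: all corners of its cells. -/
def polyVerts (P : Finset (ℤ × ℤ)) : Finset (ℤ × ℤ) :=
  P.biUnion fun c => {(c.1, c.2), (c.1 + 1, c.2), (c.1, c.2 + 1), (c.1 + 1, c.2 + 1)}

/-- The (ordered) pair `(u, v)` forms one of the four sides of the cell `c`. -/
def IsSideOf (c u v : ℤ × ℤ) : Prop :=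
  (u = (c.1, c.2) ∧ v = (c.1 + 1, c.2)) ∨
  (u = (c.1, c.2 + 1) ∧ v = (c.1 + 1, c.2 + 1)) ∨
  (u = (c.1, c.2) ∧ v = (c.1, c.2 + 1)) ∨
  (u = (c.1 + 1, c.2) ∧ v = (c.1 + 1, c.2 + 1))

/-- The triangulation of the polyomino `P` determined by the choice `d` of a diagonal
for each cell: all sides of cells of `P`, plus for each cell `c ∈ P` the main diagonal
`{c, c+(1,1)}` if `d c = 0` and the anti-diagonal `{c+(1,0), c+(0,1)}` if `d c = 1`. -/
def PolyTri (P : Finset (ℤ × ℤ)) (d : ℤ × ℤ → Fin 2) :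
    SimpleGraph {v : ℤ × ℤ // v ∈ polyVerts P} :=
  SimpleGraph.fromRel fun u v =>
    (∃ c ∈ P, IsSideOf c u.val v.val) ∨
    (∃ c ∈ P, (d c = 0 ∧ u.val = (c.1, c.2) ∧ v.val = (c.1 + 1, c.2 + 1)) ∨
              (d c = 1 ∧ u.val = (c.1 + 1, c.2) ∧ v.val = (c.1, c.2 + 1)))
/-- A polyomino is convex if each of its rows and columns is contiguous. -/
def IsConvexPolyomino (P : Finset (ℤ × ℤ)) : Prop :=
  (∀ i iM iR j : ℤ, (i, j) ∈ P → (iR, j) ∈ P → i < iM → iM < iR → (iM, j) ∈ P) ∧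
  (∀ i j jM jR : ℤ, (i, j) ∈ P → (i, jR) ∈ P → j < jM → jM < jR → (i, jM) ∈ P)

theorem exists_add_one_eq_add {G : Type*} [AddCommGroup G] (g : ℤ → G) :
    ∃ f : ℤ → G, ∀ n, f (n + 1) = f n + g n := by
  refine ⟨fun n => ∑ i ∈ Finset.Ico 0 n, g i - ∑ i ∈ Finset.Ico n 0, g i, fun n => ?_⟩
  dsimp only
  rcases le_or_gt 0 n with hn | hn
  · rw [← Finset.insert_Ico_right_eq_Ico_add_one hn, Finset.sum_insert (by simp),
      Finset.Ico_eq_empty_of_le hn, Finset.Ico_eq_empty_of_le (by omega : (0 : ℤ) ≤ n + 1)]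
    abel
  · rw [← Finset.insert_Ico_add_one_left_eq_Ico hn, Finset.sum_insert (by simp),
      Finset.Ico_eq_empty_of_le hn.le, Finset.Ico_eq_empty_of_le (by omega : n + 1 ≤ 0)]
    abel

theorem Set.OrdConnected.apply_eq_of_apply_add_one_eq {α : Type*} {I : Set ℤ}
    (hI : I.OrdConnected) {f : ℤ → α} (hf : ∀ n ∈ I, n + 1 ∈ I → f (n + 1) = f n)
    {a b : ℤ} (ha : a ∈ I) (hb : b ∈ I) : f a = f b := by
  wlog hab : a ≤ b
  · exact (this hI hf hb ha (le_of_not_ge hab)).symm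
  suffices ∀ n, a ≤ n → n ≤ b → f n = f a from (this b hab le_rfl).symm
  refine Int.leInduction (fun _ => rfl) fun n han ih hnb => ?_
  rw [hf n (hI.out ha hb ⟨han, by omega⟩) (hI.out ha hb ⟨by omega, hnb⟩), ih (by omega)]

theorem exists_add_eq_of_block_add_eq_add {G : Type*} [AddCommGroup G] {S : Set (ℤ × ℤ)}
    (hcol : ∀ i, {j | (i, j) ∈ S}.OrdConnected) (hrow : ∀ j, {i | (i, j) ∈ S}.OrdConnected)
    {E : ℤ × ℤ → G}
    (hE : ∀ i j, (i, j) ∈ S → (i + 1, j) ∈ S → (i, j + 1) ∈ S → (i + 1, j + 1) ∈ S →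
      E (i, j) + E (i + 1, j + 1) = E (i + 1, j) + E (i, j + 1)) :
    ∃ X Y : ℤ → G, ∀ i j, (i, j) ∈ S → X i + Y j = E (i, j) := by
  classical
  have hinc : ∀ i i' j, (i, j) ∈ S → (i, j + 1) ∈ S → (i', j) ∈ S → (i', j + 1) ∈ S →
      E (i, j + 1) - E (i, j) = E (i', j + 1) - E (i', j) := fun i i' j h₁ h₂ h₃ h₄ =>
    ((hrow j).inter (hrow (j + 1))).apply_eq_of_apply_add_one_eq
      (f := fun i => E (i, j + 1) - E (i, j))
      (fun n hn hn' => by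
        rw [sub_eq_sub_iff_add_eq_add, add_comm, hE n j hn.1 hn'.1 hn.2 hn'.2, add_comm])
      ⟨h₁, h₂⟩ ⟨h₃, h₄⟩
  obtain ⟨Y, hY⟩ := exists_add_one_eq_add fun j =>
    if h : ∃ i, (i, j) ∈ S ∧ (i, j + 1) ∈ S then E (h.choose, j + 1) - E (h.choose, j) else 0
  have hYinc : ∀ i j, (i, j) ∈ S → (i, j + 1) ∈ S → Y (j + 1) - Y j = E (i, j + 1) - E (i, j) := by
    intro i j h₁ h₂
    have h : ∃ i, (i, j) ∈ S ∧ (i, j + 1) ∈ S := ⟨i, h₁, h₂⟩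
    rw [hY, add_sub_cancel_left, dif_pos h]
    exact hinc _ _ _ h.choose_spec.1 h.choose_spec.2 h₁ h₂
  have hconst : ∀ i j j', (i, j) ∈ S → (i, j') ∈ S → E (i, j) - Y j = E (i, j') - Y j' :=
    fun i _ _ => (hcol i).apply_eq_of_apply_add_one_eq (f := fun j => E (i, j) - Y j)
      fun n hn hn' => by rw [sub_eq_sub_iff_sub_eq_sub, hYinc i n hn hn']
  refine ⟨fun i => if h : ∃ j, (i, j) ∈ S then E (i, h.choose) - Y h.choose else 0, Y,
    fun i j hij => ?_⟩
  have h : ∃ j, (i, j) ∈ S := ⟨j, hij⟩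
  dsimp only
  rw [dif_pos h, hconst i _ j h.choose_spec hij, sub_add_cancel]

theorem IsConvexPolyomino.ordConnected_column {P : Finset (ℤ × ℤ)} (h : IsConvexPolyomino P)
    (i : ℤ) : {j | (i, j) ∈ P}.OrdConnected := by
  refine ⟨fun a ha b hb m ⟨ham, hmb⟩ => ?_⟩
  rcases ham.eq_or_lt with rfl | ham
  · exact ha
  rcases hmb.eq_or_lt with rfl | hmb
  · exact hb
  exact h.2 i a m b ha hb ham hmb

theorem IsConvexPolyomino.ordConnected_row {P : Finset (ℤ × ℤ)} (h : IsConvexPolyomino P)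
    (j : ℤ) : {i | (i, j) ∈ P}.OrdConnected := by
  refine ⟨fun a ha b hb m ⟨ham, hmb⟩ => ?_⟩
  rcases ham.eq_or_lt with rfl | ham
  · exact ha
  rcases hmb.eq_or_lt with rfl | hmb
  · exact hb
  exact h.1 a m b j ha hb ham hmb

def IsDiagOf (c : ℤ × ℤ) (t : Fin 2) (u v : ℤ × ℤ) : Prop :=
  (t = 0 ∧ u = (c.1, c.2) ∧ v = (c.1 + 1, c.2 + 1)) ∨
  (t = 1 ∧ u = (c.1 + 1, c.2) ∧ v = (c.1, c.2 + 1))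

theorem polyTri_adj {P : Finset (ℤ × ℤ)} {d : ℤ × ℤ → Fin 2} {u v : polyVerts P} :
    (PolyTri P d).Adj u v ↔ u ≠ v ∧
      (((∃ c ∈ P, IsSideOf c u v) ∨ ∃ c ∈ P, IsDiagOf c (d c) u v) ∨
        ((∃ c ∈ P, IsSideOf c v u) ∨ ∃ c ∈ P, IsDiagOf c (d c) v u)) :=
  SimpleGraph.fromRel_adj _ _ _

def signStep : Fin 2 → ZMod 3 := ![1, -1]

theorem signStep_ne_zero : ∀ x, signStep x ≠ 0 := by decide

theorem signStep_add_ne_zero : ∀ x y, x + y = 0 → signStep x + signStep y ≠ 0 := by decide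

theorem signStep_ne_of_add_eq_one : ∀ x y, x + y = 1 → signStep x ≠ signStep y := by decide

section Coloring

variable {X Y : ℤ → Fin 2} {A B : ℤ → ZMod 3}
  (hA : ∀ i, A (i + 1) = A i + signStep (X i)) (hB : ∀ j, B (j + 1) = B j + signStep (Y j))
include hA hB

theorem color_ne_of_isSideOf {c u v : ℤ × ℤ} (h : IsSideOf c u v) :
    A u.1 + B u.2 ≠ A v.1 + B v.2 := by
  rcases h with ⟨rfl, rfl⟩ | ⟨rfl, rfl⟩ | ⟨rfl, rfl⟩ | ⟨rfl, rfl⟩ <;> intro h <;>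
    simp only [hA, hB] at h
  · exact signStep_ne_zero (X c.1) (by linear_combination -h)
  · exact signStep_ne_zero (X c.1) (by linear_combination -h)
  · exact signStep_ne_zero (Y c.2) (by linear_combination -h)
  · exact signStep_ne_zero (Y c.2) (by linear_combination -h)

theorem color_ne_of_isDiagOf {c u v : ℤ × ℤ} {t : Fin 2} (hc : X c.1 + Y c.2 = t)
    (h : IsDiagOf c t u v) : A u.1 + B u.2 ≠ A v.1 + B v.2 := by
  rcases h with ⟨rfl, rfl, rfl⟩ | ⟨rfl, rfl, rfl⟩ <;> intro h <;> simp only [hA, hB] at h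
  · exact signStep_add_ne_zero _ _ hc (by linear_combination -h)
  · exact signStep_ne_of_add_eq_one _ _ hc (by linear_combination h)

end Coloring

theorem polyTri_colorable_of_add_eq (P : Finset (ℤ × ℤ)) (d : ℤ × ℤ → Fin 2) (X Y : ℤ → Fin 2)
    (hXY : ∀ i j, (i, j) ∈ P → X i + Y j = d (i, j)) : (PolyTri P d).Colorable 3 := by
  obtain ⟨A, hA⟩ := exists_add_one_eq_add (signStep ∘ X)
  obtain ⟨B, hB⟩ := exists_add_one_eq_add (signStep ∘ Y)
  have hne : ∀ u v : ℤ × ℤ, ((∃ c ∈ P, IsSideOf c u v) ∨ ∃ c ∈ P, IsDiagOf c (d c) u v) →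
      A u.1 + B u.2 ≠ A v.1 + B v.2 := by
    rintro u v (⟨c, -, h⟩ | ⟨c, hc, h⟩)
    · exact color_ne_of_isSideOf hA hB h
    · exact color_ne_of_isDiagOf hA hB (hXY c.1 c.2 hc) h
  refine ⟨SimpleGraph.Coloring.mk (fun v => A v.1.1 + B v.1.2) fun {u v} huv => ?_⟩
  rcases (polyTri_adj.1 huv).2 with h | h
  · exact hne u v h
  · exact (hne v u h).symm

theorem zmod3_eq_zero_of_eq_neg : ∀ a : ZMod 3, a = -a → a = 0 := by decide

theorem zmod3_eq_neg_of_ne : ∀ a b : ZMod 3, a ≠ 0 → b ≠ 0 → a ≠ b → b = -a := by decide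

theorem not_colorable_three_of_odd_wheel {V : Type*} {G : SimpleGraph V} {n : ℕ}
    (hn : Odd n) (v : V) (w : ZMod n → V) (hv : ∀ i, G.Adj v (w i))
    (hw : ∀ i, G.Adj (w i) (w (i + 1))) : ¬ G.Colorable 3 := by
  rintro ⟨C⟩
  let g : ZMod n → ZMod 3 := fun i => C (w i) - C v
  have hg : ∀ i, g i ≠ 0 := fun i h => C.valid (hv i) (sub_eq_zero.1 h).symm
  have hstep : ∀ i, g (i + 1) = -g i := fun i =>
    zmod3_eq_neg_of_ne _ _ (hg i) (hg (i + 1)) fun h => C.valid (hw i) (sub_left_inj.1 h)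
  have hpow : ∀ k : ℕ, g k = (-1) ^ k * g 0 := by
    intro k
    induction k with
    | zero => simp
    | succ k ih => rw [Nat.cast_succ, hstep, ih, pow_succ]; ring
  have h0 : g 0 = -g 0 := by simpa [hn.neg_one_pow, ZMod.natCast_self] using hpow n
  exact hg 0 (zmod3_eq_zero_of_eq_neg _ h0)

instance : DecidableRel T1.Adj := by unfold T1 gridEdges33; infer_instance

instance : DecidableRel T2.Adj := by unfold T2 gridEdges33; infer_instance

theorem T1_not_colorable : ¬ T1.Colorable 3 :=
  not_colorable_three_of_odd_wheel (n := 5) (by decide) 4 ![1, 5, 7, 6, 3]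
    (fun i => by fin_cases i <;> decide) (fun i => by fin_cases i <;> decide)

theorem T2_not_colorable : ¬ T2.Colorable 3 :=
  not_colorable_three_of_odd_wheel (n := 7) (by decide) 4 ![0, 1, 2, 5, 8, 7, 3]
    (fun i => by fin_cases i <;> decide) (fun i => by fin_cases i <;> decide)

instance (c u v : ℤ × ℤ) : Decidable (IsSideOf c u v) := by unfold IsSideOf; infer_instance

instance (c : ℤ × ℤ) (t : Fin 2) (u v : ℤ × ℤ) : Decidable (IsDiagOf c t u v) := by
  unfold IsDiagOf; infer_instance

def ofFin {m n : ℕ} (p : Fin m × Fin n) : ℤ × ℤ := ((p.1 : ℕ), (p.2 : ℕ))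

def blockGraph (D : Fin 2 × Fin 2 → Fin 2) : SimpleGraph (Fin 3 × Fin 3) :=
  SimpleGraph.fromRel fun p q =>
    (∃ k : Fin 2 × Fin 2, IsSideOf (ofFin k) (ofFin p) (ofFin q)) ∨
      ∃ k : Fin 2 × Fin 2, IsDiagOf (ofFin k) (D k) (ofFin p) (ofFin q)

instance (D : Fin 2 × Fin 2 → Fin 2) : DecidableRel (blockGraph D).Adj := by
  unfold blockGraph; infer_instance

def rotate : Equiv.Perm (Fin 3 × Fin 3) :=
  (Equiv.prodComm _ _).trans (Equiv.prodCongr (Equiv.refl _) Fin.revPerm)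

/-- An odd block has one or three diagonals through its centre vertex, and rotating `T1` (one such
diagonal) or `T2` (three) gives every odd block. -/
theorem nonempty_T1_iso_or_T2_iso (D : Fin 2 × Fin 2 → Fin 2)
    (hD : D (0, 0) + D (1, 1) ≠ D (1, 0) + D (0, 1)) :
    Nonempty (T1 ≃g blockGraph D) ∨ Nonempty (T2 ≃g blockGraph D) := by
  let σ (r : ℕ) : Fin 9 ≃ Fin 3 × Fin 3 := finProdFinEquiv.symm.trans (rotate ^ r)
  suffices ∃ r < 4, (∀ a b, (blockGraph D).Adj (σ r a) (σ r b) ↔ T1.Adj a b) ∨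
      (∀ a b, (blockGraph D).Adj (σ r a) (σ r b) ↔ T2.Adj a b) by
    obtain ⟨r, -, h | h⟩ := this
    exacts [.inl ⟨⟨σ r, h _ _⟩⟩, .inr ⟨⟨σ r, h _ _⟩⟩]
  obtain ⟨a, b, c, e, rfl⟩ : ∃ a b c e : Fin 2, D = fun k => ![![a, b], ![c, e]] k.1 k.2 :=
    ⟨_, _, _, _, funext fun k => by fin_cases k <;> rfl⟩
  revert a b c e
  decide

theorem isSideOf_add_iff (t c u v : ℤ × ℤ) : IsSideOf (t + c) (t + u) (t + v) ↔ IsSideOf c u v := by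
  simp only [IsSideOf, Prod.ext_iff, Prod.fst_add, Prod.snd_add]
  omega

theorem isDiagOf_add_iff (t c : ℤ × ℤ) (s : Fin 2) (u v : ℤ × ℤ) :
    IsDiagOf (t + c) s (t + u) (t + v) ↔ IsDiagOf c s u v := by
  simp only [IsDiagOf, Prod.ext_iff, Prod.fst_add, Prod.snd_add]
  omega

theorem IsSideOf.eq_add {c u v : ℤ × ℤ} (h : IsSideOf c u v) : v = u + (1, 0) ∨ v = u + (0, 1) := by
  simp only [IsSideOf, Prod.ext_iff, Prod.fst_add, Prod.snd_add] at h ⊢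
  omega

theorem exists_isSideOf_ofFin_of_eq_add : ∀ p q : Fin 3 × Fin 3,
    ofFin q = ofFin p + (1, 0) ∨ ofFin q = ofFin p + (0, 1) →
      ∃ k : Fin 2 × Fin 2, IsSideOf (ofFin k) (ofFin p) (ofFin q) := by
  decide

theorem exists_ofFin_eq_of_isDiagOf {c : ℤ × ℤ} {s : Fin 2} {p q : Fin 3 × Fin 3}
    (h : IsDiagOf c s (ofFin p) (ofFin q)) : ∃ k : Fin 2 × Fin 2, c = ofFin k := by
  have := p.1.isLt; have := p.2.isLt; have := q.1.isLt; have := q.2.isLt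
  simp only [IsDiagOf, ofFin, Prod.ext_iff] at h
  refine ⟨(⟨c.1.toNat, by omega⟩, ⟨c.2.toNat, by omega⟩), ?_⟩
  simp only [ofFin, Prod.ext_iff]
  omega

theorem add_ofFin_mem_polyVerts {P : Finset (ℤ × ℤ)} {c : ℤ × ℤ} (hc : c ∈ P)
    (e : Fin 2 × Fin 2) : c + ofFin e ∈ polyVerts P := by
  refine Finset.mem_biUnion.2 ⟨c, hc, ?_⟩
  fin_cases e <;> simp [ofFin, Prod.ext_iff]

theorem exists_ofFin_eq_add_ofFin : ∀ p : Fin 3 × Fin 3,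
    ∃ k e : Fin 2 × Fin 2, ofFin p = ofFin k + ofFin e := by
  decide

section Block

variable {P : Finset (ℤ × ℤ)} {d : ℤ × ℤ → Fin 2} {t : ℤ × ℤ}
  (hP : ∀ k : Fin 2 × Fin 2, t + ofFin k ∈ P)
include hP

theorem polyTriRel_add_ofFin_iff (p q : Fin 3 × Fin 3) :
    ((∃ c ∈ P, IsSideOf c (t + ofFin p) (t + ofFin q)) ∨
        ∃ c ∈ P, IsDiagOf c (d c) (t + ofFin p) (t + ofFin q)) ↔
      ((∃ k : Fin 2 × Fin 2, IsSideOf (ofFin k) (ofFin p) (ofFin q)) ∨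
        ∃ k : Fin 2 × Fin 2, IsDiagOf (ofFin k) (d (t + ofFin k)) (ofFin p) (ofFin q)) := by
  refine or_congr ⟨?_, fun ⟨k, h⟩ => ⟨t + ofFin k, hP k, (isSideOf_add_iff ..).2 h⟩⟩
    ⟨?_, fun ⟨k, h⟩ => ⟨t + ofFin k, hP k, (isDiagOf_add_iff ..).2 h⟩⟩
  · rintro ⟨c, -, h⟩
    rw [← add_sub_cancel t c, isSideOf_add_iff] at h
    exact exists_isSideOf_ofFin_of_eq_add p q h.eq_add
  · rintro ⟨c, -, h⟩
    rw [← add_sub_cancel t c, isDiagOf_add_iff] at h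
    obtain ⟨k, hk⟩ := exists_ofFin_eq_of_isDiagOf h
    rw [hk] at h
    exact ⟨k, h⟩

def blockEmbedding : blockGraph (fun k => d (t + ofFin k)) ↪g PolyTri P d where
  toFun p := ⟨t + ofFin p, by
    obtain ⟨k, e, h⟩ := exists_ofFin_eq_add_ofFin p
    rw [h, ← add_assoc]
    exact add_ofFin_mem_polyVerts (hP k) e⟩
  inj' p q h := by
    simpa [ofFin, Prod.ext_iff, Fin.val_inj] using h
  map_rel_iff' {p q} := by
    rw [polyTri_adj, blockGraph, SimpleGraph.fromRel_adj]
    exact and_congr (Function.Embedding.injective _).ne_iff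
      (or_congr (polyTriRel_add_ofFin_iff hP p q) (polyTriRel_add_ofFin_iff hP q p))

end Block

theorem nonempty_embedding_T1_or_T2_of_odd_block {P : Finset (ℤ × ℤ)} {d : ℤ × ℤ → Fin 2}
    {x y : ℤ} (h₀₀ : (x, y) ∈ P) (h₁₀ : (x + 1, y) ∈ P) (h₀₁ : (x, y + 1) ∈ P)
    (h₁₁ : (x + 1, y + 1) ∈ P) (hodd : d (x, y) + d (x + 1, y + 1) ≠ d (x + 1, y) + d (x, y + 1)) :
    Nonempty (T1 ↪g PolyTri P d) ∨ Nonempty (T2 ↪g PolyTri P d) := by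
  have hP : ∀ k : Fin 2 × Fin 2, (x, y) + ofFin k ∈ P := by
    intro k
    fin_cases k <;> simpa [ofFin]
  rcases nonempty_T1_iso_or_T2_iso (fun k => d ((x, y) + ofFin k)) (by simpa [ofFin] using hodd)
    with ⟨⟨e⟩⟩ | ⟨⟨e⟩⟩
  exacts [.inl ⟨(blockEmbedding hP).comp e.toEmbedding⟩,
    .inr ⟨(blockEmbedding hP).comp e.toEmbedding⟩]

theorem polyTri_colorable_iff_no_T1_T2_general
    (P : Finset (ℤ × ℤ)) (hconv : IsConvexPolyomino P)
    (d : ℤ × ℤ → Fin 2) :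
    (PolyTri P d).Colorable 3 ↔
      (¬ Nonempty (T1 ↪g PolyTri P d) ∧ ¬ Nonempty (T2 ↪g PolyTri P d)) := by
  refine ⟨fun h => ⟨fun ⟨e⟩ => T1_not_colorable (.of_hom e.toHom h),
    fun ⟨e⟩ => T2_not_colorable (.of_hom e.toHom h)⟩, fun ⟨h₁, h₂⟩ => ?_⟩
  have heven : ∀ i j, (i, j) ∈ P → (i + 1, j) ∈ P → (i, j + 1) ∈ P → (i + 1, j + 1) ∈ P →
      d (i, j) + d (i + 1, j + 1) = d (i + 1, j) + d (i, j + 1) := by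
    intro i j h₀₀ h₁₀ h₀₁ h₁₁
    by_contra hodd
    rcases nonempty_embedding_T1_or_T2_of_odd_block h₀₀ h₁₀ h₀₁ h₁₁ hodd with h | h
    exacts [h₁ h, h₂ h]
  obtain ⟨X, Y, hXY⟩ := exists_add_eq_of_block_add_eq_add (S := ↑P)
    hconv.ordConnected_column hconv.ordConnected_row heven
  exact polyTri_colorable_of_add_eq P d X Y hXY

/-- A triangulation of a convex polyomino is 3-colorable if and only if it contains no
induced subgraph isomorphic to `T1` or `T2`. -/
theorem polyTri_colorable_iff_no_T1_T2
    (P : Finset (ℤ × ℤ)) (hpoly : IsPolyomino P) (hconv : IsConvexPolyomino P)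
    (d : ℤ × ℤ → Fin 2) :
    (PolyTri P d).Colorable 3 ↔
      (¬ Nonempty (T1 ↪g PolyTri P d) ∧ ¬ Nonempty (T2 ↪g PolyTri P d)) :=
  polyTri_colorable_iff_no_T1_T2_general P hconv d
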